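/- Let G be a Tanner graph with girth g > 4 in which every variable node has degree at least d ≥ 3 and every check node has degree at least 2. Then every nonzero nonnegative real vector p satisfying the fundamental cone inequalities of G satisfies w_BSC(p) ≥ (d−1)^{⌈g/4⌉−1} and w_AWGN(p) ≥ (d−1)^{⌈g/4⌉−1}. -/

import Mathlib

/-- A Tanner graph with `n` variable nodes and `m` check nodes, given by the
neighborhood `N u` (the set of variable nodes adjacent to check node `u`). -/
structure TannerGraph (n m : ℕ) where
  N : Fin m → Finset (Fin n)

/-- The underlying bipartite simple graph of a Tanner graph, on vertex set
`Fin n ⊕ Fin m` (variable nodes on the left, check nodes on the right). -/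
def TannerGraph.graph {n m : ℕ} (G : TannerGraph n m) : SimpleGraph (Fin n ⊕ Fin m) :=
  SimpleGraph.fromRel (fun a b =>
    match a, b with
    | Sum.inl i, Sum.inr j => i ∈ G.N j
    | _, _ => False)

/-- The degree of variable node `i` in the Tanner graph. -/
def TannerGraph.varDeg {n m : ℕ} (G : TannerGraph n m) (i : Fin n) : ℕ :=
  (Finset.univ.filter (fun j : Fin m => i ∈ G.N j)).card

/-- AWGN pseudocodeword weight. -/
noncomputable def wAWGN {n : ℕ} (p : Fin n → ℝ) : ℝ :=
  (∑ i, p i) ^ 2 / (∑ i, (p i) ^ 2)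

/-- The sum of the `e` largest components of `p` (for nonnegative `p`),
expressed as the largest sum over sets of `e` coordinates. -/
noncomputable def maxSum {n : ℕ} (p : Fin n → ℝ) (e : ℕ) : ℝ :=
  sSup ((fun S : Finset (Fin n) => ∑ i ∈ S, p i) '' {S | S.card = e})

/-- The smallest number `e` such that the sum of the `e` largest components of `p`
is at least half of the total sum. -/
noncomputable def eBSC {n : ℕ} (p : Fin n → ℝ) : ℕ :=
  sInf {e : ℕ | (∑ i, p i) / 2 ≤ maxSum p e}

/-- BSC pseudocodeword weight. -/
noncomputable def wBSC {n : ℕ} (p : Fin n → ℝ) : ℝ :=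
  if maxSum p (eBSC p) = (∑ i, p i) / 2 then 2 * (eBSC p : ℝ) else 2 * (eBSC p : ℝ) - 1

/-!
Root the Tanner graph at a variable node `i₀` where `p` is largest and let `L t` be the variable
nodes at distance `2t`. As long as `4t` is below the girth, shortest paths from `i₀` are unique,
so the ball of radius `2t` is a tree: every node of `L t` has at least `d - 1` child checks, the
other neighbours of these checks lie in `L (t + 1)`, and distinct (node, child) pairs have disjoint
neighbourhoods. Summing the cone inequality `p i ≤ ∑_{N(j) \ i} p` over these pairs gives
`(d - 1) ∑_{L t} p ≤ ∑_{L (t+1)} p`, hence `(d - 1)^k p i₀ ≤ ∑ p` for `k = ⌈g/4⌉ - 1`. Both weights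
are at least `∑ p / max p` (the BSC weight up to rounding, which is harmless for an integer bound).
-/

open SimpleGraph Finset

namespace SimpleGraph

variable {V : Type*} {G : SimpleGraph V}

lemma Walk.IsPath.eq_of_length_add_lt_egirth {u v : V} {p q : G.Walk u v} (hp : p.IsPath)
    (hq : q.IsPath) (h : ((p.length + q.length : ℕ) : ℕ∞) < G.egirth) : p = q := by
  by_contra hne
  obtain ⟨_, -, -, c, hc, hlen⟩ := hp.exists_isCycle_length_le_add_of_ne hq hne
  exact (egirth_le_length hc).not_gt (h.trans_le' (by exact_mod_cast hlen))

lemma eq_of_adj_of_dist_eq_of_dist_eq_succ {r u₁ u₂ v : V} {s : ℕ} (h₁ : G.Adj u₁ v)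
    (h₂ : G.Adj u₂ v) (hu₁ : G.dist r u₁ = s) (hu₂ : G.dist r u₂ = s) (hv : G.dist r v = s + 1)
    (hs : ((2 * (s + 1) : ℕ) : ℕ∞) < G.egirth) : u₁ = u₂ := by
  have hr : G.Reachable r v := Reachable.of_dist_ne_zero (by omega)
  have geodesic : ∀ u (h : G.Adj u v), G.dist r u = s →
      ∃ P : G.Walk r u, (P.concat h).IsPath ∧ (P.concat h).length = s + 1 := by
    intro u h hu
    obtain ⟨P, hP⟩ := (hr.trans h.symm.reachable).exists_walk_length_eq_dist
    have hlen : (P.concat h).length = s + 1 := by rw [Walk.length_concat, hP, hu]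
    exact ⟨P, Walk.isPath_of_length_eq_dist _ (hlen.trans hv.symm), hlen⟩
  obtain ⟨P₁, hP₁, hl₁⟩ := geodesic u₁ h₁ hu₁
  obtain ⟨P₂, hP₂, hl₂⟩ := geodesic u₂ h₂ hu₂
  exact (Walk.concat_inj (hP₁.eq_of_length_add_lt_egirth hP₂ (by rwa [hl₁, hl₂, ← two_mul]))).1

end SimpleGraph

namespace TannerGraph

open Sum

variable {n m : ℕ} (G : TannerGraph n m)

@[simp]
lemma graph_adj_inl_inr {i : Fin n} {j : Fin m} : G.graph.Adj (inl i) (inr j) ↔ i ∈ G.N j := by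
  simp [graph]

@[simp]
lemma graph_adj_inr_inl {i : Fin n} {j : Fin m} : G.graph.Adj (inr j) (inl i) ↔ i ∈ G.N j := by
  simp [graph]

def sideColoring : G.graph.Coloring Bool :=
  Coloring.mk Sum.isLeft fun {a b} h => by
    cases a <;> cases b <;> simp_all [graph]

lemma even_dist_iff {a b : Fin n ⊕ Fin m} (h : G.graph.Reachable a b) :
    Even (G.graph.dist a b) ↔ (a.isLeft ↔ b.isLeft) := by
  obtain ⟨P, hP⟩ := h.exists_walk_length_eq_dist
  rw [← hP]
  exact G.sideColoring.even_length_iff_congr P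

open scoped Classical in
/-- `dist` is `0` between vertices in different components, hence the reachability conjunct. -/
noncomputable def level (i₀ : Fin n) (t : ℕ) : Finset (Fin n) :=
  {i | G.graph.Reachable (inl i₀) (inl i) ∧ G.graph.dist (inl i₀) (inl i) = 2 * t}

open scoped Classical in
noncomputable def children (i₀ i : Fin n) : Finset (Fin m) :=
  {j | i ∈ G.N j ∧ G.graph.dist (inl i₀) (inr j) = G.graph.dist (inl i₀) (inl i) + 1}

variable {G} {i₀ i w : Fin n} {j : Fin m} {t : ℕ}

lemma mem_level : i ∈ G.level i₀ t ↔
    G.graph.Reachable (inl i₀) (inl i) ∧ G.graph.dist (inl i₀) (inl i) = 2 * t := by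
  simp [level]

lemma mem_children : j ∈ G.children i₀ i ↔
    i ∈ G.N j ∧ G.graph.dist (inl i₀) (inr j) = G.graph.dist (inl i₀) (inl i) + 1 := by
  simp [children]

lemma dist_inl_inr_mod_two (h : G.graph.Reachable (inl i₀) (inr j)) :
    G.graph.dist (inl i₀) (inr j) % 2 = 1 := by
  simpa [Nat.even_iff] using G.even_dist_iff h

lemma dist_inl_inl_mod_two (h : G.graph.Reachable (inl i₀) (inl i)) :
    G.graph.dist (inl i₀) (inl i) % 2 = 0 := by
  simpa [Nat.even_iff] using G.even_dist_iff h

lemma varDeg_sub_one_le_card_children (hi : i ∈ G.level i₀ t)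
    (ht : ((4 * t : ℕ) : ℕ∞) < G.graph.egirth) : G.varDeg i - 1 ≤ #(G.children i₀ i) := by
  obtain ⟨hreach, hdist⟩ := mem_level.1 hi
  unfold varDeg
  set checks : Finset (Fin m) := univ.filter fun j => i ∈ G.N j
  have parent : ∀ j ∈ checks.filter (· ∉ G.children i₀ i),
      G.graph.Adj (inr j) (inl i) ∧ G.graph.dist (inl i₀) (inr j) + 1 = 2 * t := by
    intro j hj
    simp only [checks, mem_children, mem_filter, mem_univ, true_and, not_and] at hj
    have hadj : G.graph.Adj (inl i) (inr j) := by simpa using hj.1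
    have hnot := hj.2 hj.1
    have hodd := dist_inl_inr_mod_two (hreach.trans hadj.reachable)
    refine ⟨hadj.symm, ?_⟩
    rcases hadj.diff_dist_adj (u := inl i₀) with h | h | h <;> omega
  have hparent : #(checks.filter (· ∉ G.children i₀ i)) ≤ 1 := by
    refine card_le_one.2 fun j₁ hj₁ j₂ hj₂ => inr.inj (α := Fin n) ?_
    obtain ⟨h₁, hd₁⟩ := parent j₁ hj₁
    obtain ⟨h₂, hd₂⟩ := parent j₂ hj₂
    exact G.graph.eq_of_adj_of_dist_eq_of_dist_eq_succ (r := inl i₀) (s := 2 * t - 1) h₁ h₂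
      (by omega) (by omega) (by omega) (ht.trans_le' (Nat.cast_le.2 (by omega)))
  have hchildren : checks.filter (· ∈ G.children i₀ i) = G.children i₀ i := by
    ext j; simp [checks, mem_children]
  have := card_filter_add_card_filter_not (s := checks) (· ∈ G.children i₀ i)
  rw [hchildren] at this
  omega

lemma mem_level_succ_of_mem_children (hi : i ∈ G.level i₀ t) (hj : j ∈ G.children i₀ i)
    (hw : w ∈ (G.N j).erase i) (ht : ((4 * t + 2 : ℕ) : ℕ∞) < G.graph.egirth) :
    w ∈ G.level i₀ (t + 1) := by
  obtain ⟨hreach, hdist⟩ := mem_level.1 hi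
  obtain ⟨hij, hdj⟩ := mem_children.1 hj
  obtain ⟨hwi, hwj⟩ := mem_erase.1 hw
  have hadj : G.graph.Adj (inr j) (inl w) := by simpa using hwj
  have hreach_w := (hreach.trans (G.graph_adj_inl_inr.2 hij).reachable).trans hadj.reachable
  have heven := dist_inl_inl_mod_two hreach_w
  refine mem_level.2 ⟨hreach_w, ?_⟩
  rcases hadj.diff_dist_adj (u := inl i₀) with h | h | h
  · omega
  · omega
  · refine absurd (inl.inj (β := Fin m) ?_) hwi
    exact G.graph.eq_of_adj_of_dist_eq_of_dist_eq_succ (r := inl i₀) (s := 2 * t) hadj.symm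
      (G.graph_adj_inl_inr.2 hij) (by omega) hdist (by omega)
      (ht.trans_le' (Nat.cast_le.2 (by omega)))

lemma pairwiseDisjoint_erase_children (ht : ((4 * (t + 1) : ℕ) : ℕ∞) < G.graph.egirth) :
    (↑((G.level i₀ t).sigma (G.children i₀)) : Set ((_ : Fin n) × Fin m)).PairwiseDisjoint
      fun x => (G.N x.2).erase x.1 := by
  rintro ⟨i₁, j₁⟩ hx ⟨i₂, j₂⟩ hy hne
  simp only [coe_sigma, Set.mem_sigma_iff, mem_coe] at hx hy
  refine disjoint_left.2 fun w hw₁ hw₂ => hne ?_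
  obtain ⟨-, hdw⟩ := mem_level.1 <|
    mem_level_succ_of_mem_children hx.1 hx.2 hw₁ (ht.trans_le' (Nat.cast_le.2 (by omega)))
  obtain ⟨-, hdist₁⟩ := mem_level.1 hx.1
  obtain ⟨-, hdist₂⟩ := mem_level.1 hy.1
  obtain ⟨hij₁, hdj₁⟩ := mem_children.1 hx.2
  obtain ⟨hij₂, hdj₂⟩ := mem_children.1 hy.2
  have hj : j₁ = j₂ := inr.inj (α := Fin n) <|
    G.graph.eq_of_adj_of_dist_eq_of_dist_eq_succ (r := inl i₀) (s := 2 * t + 1)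
      (G.graph_adj_inr_inl.2 (mem_erase.1 hw₁).2) (G.graph_adj_inr_inl.2 (mem_erase.1 hw₂).2)
      (by omega) (by omega) (by omega) (ht.trans_le' (Nat.cast_le.2 (by omega)))
  subst hj
  have hi : i₁ = i₂ := inl.inj (β := Fin m) <|
    G.graph.eq_of_adj_of_dist_eq_of_dist_eq_succ (r := inl i₀) (s := 2 * t)
      (G.graph_adj_inl_inr.2 hij₁) (G.graph_adj_inl_inr.2 hij₂)
      hdist₁ hdist₂ (by omega) (ht.trans_le' (Nat.cast_le.2 (by omega)))
  rw [hi]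

lemma level_zero (i₀ : Fin n) : G.level i₀ 0 = {i₀} := by
  ext i
  simp only [mem_level, mul_zero, SimpleGraph.dist_eq_zero_iff_eq_or_not_reachable, inl.injEq,
    mem_singleton]
  grind [SimpleGraph.Reachable.refl]

variable {d : ℕ} {p : Fin n → ℝ}

lemma mul_sum_level_le_sum_level_succ (hdeg : ∀ i, d ≤ G.varDeg i) (hp0 : ∀ i, 0 ≤ p i)
    (hcone : ∀ j, ∀ i ∈ G.N j, p i ≤ ∑ k ∈ (G.N j).erase i, p k) {i₀ : Fin n} {t : ℕ}
    (ht : ((4 * (t + 1) : ℕ) : ℕ∞) < G.graph.egirth) :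
    ((d - 1 : ℕ) : ℝ) * ∑ i ∈ G.level i₀ t, p i ≤ ∑ i ∈ G.level i₀ (t + 1), p i := by
  have hdisj := pairwiseDisjoint_erase_children (i₀ := i₀) ht
  calc ((d - 1 : ℕ) : ℝ) * ∑ i ∈ G.level i₀ t, p i
      ≤ ∑ i ∈ G.level i₀ t, ∑ _j ∈ G.children i₀ i, p i := by
        rw [mul_sum]
        refine sum_le_sum fun i hi => ?_
        rw [sum_const, nsmul_eq_mul]
        gcongr
        · exact hp0 i
        · exact (Nat.sub_le_sub_right (hdeg i) 1).trans
            (varDeg_sub_one_le_card_children hi (ht.trans_le' (Nat.cast_le.2 (by omega))))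
    _ ≤ ∑ i ∈ G.level i₀ t, ∑ j ∈ G.children i₀ i, ∑ k ∈ (G.N j).erase i, p k := by
        gcongr with i _ j hj
        exact hcone j i (mem_children.1 hj).1
    _ = ∑ k ∈ ((G.level i₀ t).sigma (G.children i₀)).biUnion
          (fun x => (G.N x.2).erase x.1), p k := by
        rw [sum_biUnion hdisj, sum_sigma]
    _ ≤ ∑ i ∈ G.level i₀ (t + 1), p i := by
        refine sum_le_sum_of_subset_of_nonneg ?_ fun i _ _ => hp0 i
        simp only [biUnion_subset, mem_sigma, and_imp, Sigma.forall]
        intro i j hi hj w hw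
        exact mem_level_succ_of_mem_children hi hj hw (ht.trans_le' (Nat.cast_le.2 (by omega)))

theorem pow_mul_le_sum (hdeg : ∀ i, d ≤ G.varDeg i) (hp0 : ∀ i, 0 ≤ p i)
    (hcone : ∀ j, ∀ i ∈ G.N j, p i ≤ ∑ k ∈ (G.N j).erase i, p k) {k : ℕ}
    (hk : ((4 * k : ℕ) : ℕ∞) < G.graph.egirth) (i₀ : Fin n) :
    ((d - 1 : ℕ) : ℝ) ^ k * p i₀ ≤ ∑ i, p i := by
  have hlevel : ∀ t ≤ k, ((d - 1 : ℕ) : ℝ) ^ t * p i₀ ≤ ∑ i ∈ G.level i₀ t, p i := by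
    intro t
    induction t with
    | zero => simp [level_zero]
    | succ t ih =>
      intro ht
      calc ((d - 1 : ℕ) : ℝ) ^ (t + 1) * p i₀
          = (d - 1 : ℕ) * (((d - 1 : ℕ) : ℝ) ^ t * p i₀) := by ring
        _ ≤ (d - 1 : ℕ) * ∑ i ∈ G.level i₀ t, p i := by gcongr; exact ih (by omega)
        _ ≤ ∑ i ∈ G.level i₀ (t + 1), p i :=
          mul_sum_level_le_sum_level_succ hdeg hp0 hcone
            (hk.trans_le' (Nat.cast_le.2 (by omega)))
  exact (hlevel k le_rfl).trans (sum_le_sum_of_subset_of_nonneg (subset_univ _) fun i _ _ => hp0 i)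

end TannerGraph

section Weights

variable {n : ℕ} {p : Fin n → ℝ}

lemma maxSum_le_mul {M : ℝ} (hM : 0 ≤ M) (hmax : ∀ i, p i ≤ M) (e : ℕ) :
    maxSum p e ≤ e * M := by
  refine Real.sSup_le ?_ (by positivity)
  rintro _ ⟨S, hS, rfl⟩
  calc ∑ i ∈ S, p i ≤ ∑ _i ∈ S, M := sum_le_sum fun i _ => hmax i
    _ = e * M := by rw [sum_const, nsmul_eq_mul, show #S = e from hS]

lemma half_sum_le_maxSum_eBSC (hp0 : ∀ i, 0 ≤ p i) : (∑ i, p i) / 2 ≤ maxSum p (eBSC p) := by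
  have hn : (∑ i, p i) / 2 ≤ maxSum p n := by
    have hsum : ∑ i, p i ≤ maxSum p n :=
      le_csSup ((Set.toFinite _).image _).bddAbove ⟨univ, by simp, rfl⟩
    linarith [sum_nonneg fun i (_ : i ∈ univ) => hp0 i]
  exact Nat.sInf_mem (s := {e | (∑ i, p i) / 2 ≤ maxSum p e}) ⟨n, hn⟩

lemma natCast_le_wBSC (hp0 : ∀ i, 0 ≤ p i) {M : ℝ} (hM : 0 < M) (hmax : ∀ i, p i ≤ M) {N : ℕ}
    (hN : N * M ≤ ∑ i, p i) : (N : ℝ) ≤ wBSC p := by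
  have hhalf := half_sum_le_maxSum_eBSC hp0
  have hle := maxSum_le_mul hM.le hmax (eBSC p)
  unfold wBSC
  split_ifs with h
  · exact le_of_mul_le_mul_right (by linarith) hM
  · have hlt : (N : ℝ) * M < 2 * eBSC p * M := by
      linarith [lt_of_le_of_ne hhalf (Ne.symm h)]
    have : N < 2 * eBSC p := by exact_mod_cast lt_of_mul_lt_mul_right hlt hM.le
    have : (N : ℝ) + 1 ≤ 2 * eBSC p := by exact_mod_cast this
    linarith

lemma le_wAWGN (hp0 : ∀ i, 0 ≤ p i) (hpne : p ≠ 0) {M : ℝ} (hM : 0 < M) (hmax : ∀ i, p i ≤ M)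
    {c : ℝ} (hc : c * M ≤ ∑ i, p i) : c ≤ wAWGN p := by
  obtain ⟨i₁, hi₁⟩ := Function.ne_iff.1 hpne
  have hpos₁ : 0 < p i₁ := (hp0 i₁).lt_of_ne' hi₁
  have hsq : ∑ i, p i ^ 2 ≤ M * ∑ i, p i := by
    rw [mul_sum]
    exact sum_le_sum fun i _ => by nlinarith [hp0 i, hmax i]
  have hsq_pos : 0 < ∑ i, p i ^ 2 :=
    sum_pos' (fun i _ => sq_nonneg _) ⟨i₁, mem_univ _, pow_pos hpos₁ 2⟩
  calc c ≤ (∑ i, p i) / M := (le_div_iff₀ hM).2 hc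
    _ = (∑ i, p i) ^ 2 / (M * ∑ i, p i) := by field_simp
    _ ≤ wAWGN p := div_le_div_of_nonneg_left (sq_nonneg _) hsq_pos hsq

end Weights

theorem feldman_bound_general {n m : ℕ} (G : TannerGraph n m) (g d : ℕ)
    (hd : 3 ≤ d) (hdeg : ∀ i : Fin n, d ≤ G.varDeg i)
    (hgirth : G.graph.girth = (g : ℕ∞))
    (p : Fin n → ℝ) (hp0 : ∀ i, 0 ≤ p i) (hpne : p ≠ 0)
    (hcone : ∀ j : Fin m, ∀ i ∈ G.N j, p i ≤ ∑ k ∈ (G.N j).erase i, p k) :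
    ((d : ℝ) - 1) ^ ((g + 3) / 4 - 1) ≤ wBSC p ∧
    ((d : ℝ) - 1) ^ ((g + 3) / 4 - 1) ≤ wAWGN p := by
  obtain ⟨i₁, hi₁⟩ := Function.ne_iff.1 hpne
  obtain ⟨i₀, -, hmax⟩ := exists_max_image univ p ⟨i₁, mem_univ _⟩
  have hpos : 0 < p i₀ := ((hp0 i₁).lt_of_ne' hi₁).trans_le (hmax i₁ (mem_univ _))
  set k := (g + 3) / 4 - 1
  have hk : ((4 * k : ℕ) : ℕ∞) < G.graph.egirth := by
    -- `girth` takes the junk value `0` on acyclic graphs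
    by_cases hacyc : G.graph.IsAcyclic
    · rw [egirth_eq_top.2 hacyc]
      exact ENat.natCast_lt_top _
    · have hg : G.graph.girth = g := by exact_mod_cast hgirth
      have : 4 * k < G.graph.girth := by have := three_le_girth hacyc; omega
      exact (Nat.cast_lt.2 this).trans_le G.graph.egirth.natCast_toNat_le_self
  have key : (((d - 1) ^ k : ℕ) : ℝ) * p i₀ ≤ ∑ i, p i := by
    exact_mod_cast G.pow_mul_le_sum hdeg hp0 hcone hk i₀
  rw [← Nat.cast_pred (by omega : 0 < d), ← Nat.cast_pow]
  exact ⟨natCast_le_wBSC hp0 hpos (fun i => hmax i (mem_univ _)) key,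
    le_wAWGN hp0 hpne hpos (fun i => hmax i (mem_univ _)) key⟩

theorem feldman_bound {n m : ℕ} (G : TannerGraph n m) (g d : ℕ)
    (hd : 3 ≤ d) (hdeg : ∀ i : Fin n, d ≤ G.varDeg i)
    (hcheckdeg : ∀ j : Fin m, 2 ≤ (G.N j).card)
    (hgirth : G.graph.girth = (g : ℕ∞)) (hg : 4 < g)
    (p : Fin n → ℝ) (hp0 : ∀ i, 0 ≤ p i) (hpne : p ≠ 0)
    (hcone : ∀ j : Fin m, ∀ i ∈ G.N j, p i ≤ ∑ k ∈ (G.N j).erase i, p k) :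
    ((d : ℝ) - 1) ^ ((g + 3) / 4 - 1) ≤ wBSC p ∧
    ((d : ℝ) - 1) ^ ((g + 3) / 4 - 1) ≤ wAWGN p :=
  feldman_bound_general G g d hd hdeg hgirth p hp0 hpne hcone
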